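/- arXiv:1805.07592 — 2 statements merged into one kernel-verified Lean document; each statement's English description precedes it below -/
import Mathlib

section
/- KL upper bound for a leaf: let Z_u^y, Z_ū^y, Z_u^ȳ, Z_ū^ȳ be nonnegative reals with Z_u^y > 0 and Z_ū^y > 0, set Z_u = Z_u^y + Z_u^ȳ, Z_ū = Z_ū^y + Z_ū^ȳ, Z_ρ^y = Z_u^y + Z_ū^y, Z_ρ = Z_u + Z_ū, and suppose Z_ū ≤ w for some w ≥ 0. Then KL(Bern(Z_u^y/Z_ρ^y) ‖ Bern(Z_u/Z_ρ)) ≤ lg((Z_u + w)/Z_u^y). -/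
/-
Write `p = a/(a+b)` and `q = c/(c+d)`, with `a ≤ c` and `b ≤ d`. Both likelihood ratios factor through
the common ratio of totals: `p/q = (a/c)·((c+d)/(a+b))` and `(1-p)/(1-q) = (b/d)·((c+d)/(a+b))`.
Since `a/c ≤ 1` and `b/d ≤ 1`, the KL divergence is at most `lg((c+d)/(a+b))`. For a leaf, `a + b = Z_ρ^y ≥ Z_u^y`
and `c + d = Z_ρ ≤ Z_u + w`.
-/

noncomputable def klBern (p q : ℝ) : ℝ :=
  p * Real.logb 2 (p / q) + (1 - p) * Real.logb 2 ((1 - p) / (1 - q))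

open Real

lemma klBern_div_add_div_add {a b c d : ℝ} (ha : 0 < a) (hb : 0 < b) (hc : 0 < c) (hd : 0 < d) :
    klBern (a / (a + b)) (c / (c + d)) =
      a / (a + b) * logb 2 (a / c) + b / (a + b) * logb 2 (b / d) + logb 2 ((c + d) / (a + b)) := by
  have h1p : 1 - a / (a + b) = b / (a + b) := by field_simp; ring
  have h1q : 1 - c / (c + d) = d / (c + d) := by field_simp; ring
  have hp : a / (a + b) / (c / (c + d)) = a / c * ((c + d) / (a + b)) := by field_simp
  have hq : b / (a + b) / (d / (c + d)) = b / d * ((c + d) / (a + b)) := by field_simp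
  have hsum : a / (a + b) + b / (a + b) = 1 := by field_simp
  unfold klBern
  rw [h1p, h1q, hp, hq, logb_mul (by positivity) (by positivity),
    logb_mul (by positivity) (by positivity)]
  linear_combination logb 2 ((c + d) / (a + b)) * hsum

lemma klBern_div_add_le_logb {a b c d : ℝ} (ha : 0 < a) (hb : 0 < b) (hac : a ≤ c) (hbd : b ≤ d) :
    klBern (a / (a + b)) (c / (c + d)) ≤ logb 2 ((c + d) / (a + b)) := by
  have hc : 0 < c := ha.trans_le hac
  have hd : 0 < d := hb.trans_le hbd
  have hac' : logb 2 (a / c) ≤ 0 :=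
    logb_nonpos one_lt_two (by positivity) ((div_le_one hc).mpr hac)
  have hbd' : logb 2 (b / d) ≤ 0 :=
    logb_nonpos one_lt_two (by positivity) ((div_le_one hd).mpr hbd)
  rw [klBern_div_add_div_add ha hb hc hd]
  have hterm_a := mul_nonpos_of_nonneg_of_nonpos (by positivity : 0 ≤ a / (a + b)) hac'
  have hterm_b := mul_nonpos_of_nonneg_of_nonpos (by positivity : 0 ≤ b / (a + b)) hbd'
  linarith

/-- `Zuy`/`Zvy` are the seen/unseen weights with label y, `Zub`/`Zvb` with other labels. -/
theorem stmt7_general (Zuy Zvy Zub Zvb w : ℝ)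
    (hZuy : 0 < Zuy) (hZvy : 0 < Zvy) (hZub : 0 ≤ Zub) (hZvb : 0 ≤ Zvb)
    (hwub : Zvy + Zvb ≤ w) :
    klBern (Zuy / (Zuy + Zvy)) ((Zuy + Zub) / ((Zuy + Zub) + (Zvy + Zvb)))
      ≤ Real.logb 2 (((Zuy + Zub) + w) / Zuy) := by
  refine (klBern_div_add_le_logb hZuy hZvy (by linarith) (by linarith)).trans ?_
  exact logb_le_logb_of_le one_lt_two (by positivity)
    (div_le_div₀ (by linarith) (by linarith) hZuy (by linarith))

/-- KL upper bound for a leaf.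
`Zuy`/`Zvy` are the seen/unseen weights with label y, `Zub`/`Zvb` with other labels. -/
theorem stmt7 (Zuy Zvy Zub Zvb w : ℝ)
    (hZuy : 0 < Zuy) (hZvy : 0 < Zvy) (hZub : 0 ≤ Zub) (hZvb : 0 ≤ Zvb)
    (hw : 0 ≤ w) (hwub : Zvy + Zvb ≤ w) :
    klBern (Zuy / (Zuy + Zvy)) ((Zuy + Zub) / ((Zuy + Zub) + (Zvy + Zvb)))
      ≤ Real.logb 2 (((Zuy + Zub) + w) / Zuy) :=
  stmt7_general Zuy Zvy Zub Zvb w hZuy hZvy hZub hZvb hwub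
end

section
/- Information-gain upper bound for one leaf: under the leaf decomposition setup with Z_u^y > 0 for all y, Z_ū ≤ w, and per-label unseen-weight bounds Z_ū^y ≤ w^y, it holds that −Σ_y Z_ρ^y·lg(Z_ρ^y/Z_ρ) ≤ −Σ_y Z_u^y·lg(Z_u^y/Z_u) + w·lg|Y| + Σ_y (Z_u^y + w^y)·lg((Z_u + w)/Z_u^y). -/
/-!
Both `-∑ Z_u^y lg(Z_u^y / Z_u)` and `w lg |Y|` are nonnegative, so it suffices to bound the
entropy of `Z_ρ` by the last sum term by term. Since `Z_ū ≤ w` and `Z_u^y ≤ Z_u^y + Z_ū^y`,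
`Z_ρ / Z_ρ^y ≤ (Z_u + w) / Z_u^y`; that logarithm is nonnegative, so the weight `Z_ρ^y` in
front of it may be raised to `Z_u^y + w^y`.
-/

open Finset Real

lemma neg_sum_mul_logb_div_sum_nonneg {ι : Type*} (s : Finset ι) {p : ι → ℝ}
    (hp : ∀ i ∈ s, 0 ≤ p i) {b : ℝ} (hb : 1 < b) :
    0 ≤ -∑ i ∈ s, p i * logb b (p i / ∑ j ∈ s, p j) := by
  have hsum : 0 ≤ ∑ j ∈ s, p j := sum_nonneg hp
  refine neg_nonneg.mpr (sum_nonpos fun i hi => mul_nonpos_of_nonneg_of_nonpos (hp i hi) ?_)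
  exact logb_nonpos hb (div_nonneg (hp i hi) hsum)
    (div_le_one_of_le₀ (single_le_sum hp hi) hsum)

lemma logb_natCast_nonneg {b : ℝ} (hb : 1 < b) (n : ℕ) : 0 ≤ logb b n :=
  div_nonneg (log_natCast_nonneg n) (log_nonneg hb.le)

lemma neg_mul_logb_div_le_mul_logb_div {b x v c A B w : ℝ} (hb : 1 < b) (hx : 0 < x)
    (hv : 0 ≤ v) (hvc : v ≤ c) (hxA : x ≤ A) (hB : 0 ≤ B) (hBw : B ≤ w) :
    -((x + v) * logb b ((x + v) / (A + B))) ≤ (x + c) * logb b ((A + w) / x) := by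
  have hxv : 0 < x + v := by linarith
  have hratio : (A + B) / (x + v) ≤ (A + w) / x :=
    div_le_div₀ (by linarith) (by linarith) hx (by linarith)
  have hlog_nonneg : 0 ≤ logb b ((A + w) / x) :=
    logb_nonneg hb ((one_le_div hx).mpr (by linarith))
  calc -((x + v) * logb b ((x + v) / (A + B)))
      = (x + v) * logb b ((A + B) / (x + v)) := by
        rw [← inv_div, logb_inv]; ring
    _ ≤ (x + v) * logb b ((A + w) / x) :=
        mul_le_mul_of_nonneg_left (logb_le_logb_of_le hb (div_pos (by linarith) hxv) hratio) hxv.le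
    _ ≤ (x + c) * logb b ((A + w) / x) :=
        mul_le_mul_of_nonneg_right (by linarith) hlog_nonneg

/-- information-gain upper bound for one leaf. -/
theorem stmt13 {Y : Type*} [Fintype Y]
    (Zu Zv wy : Y → ℝ) (w : ℝ)
    (hZu : ∀ y, 0 < Zu y) (hZv : ∀ y, 0 ≤ Zv y)
    (hw : (∑ y, Zv y) ≤ w) (hwy : ∀ y, Zv y ≤ wy y) :
    -(∑ y, (Zu y + Zv y) *
        Real.logb 2 ((Zu y + Zv y) / ((∑ z, Zu z) + ∑ z, Zv z)))
      ≤ (-(∑ y, Zu y * Real.logb 2 (Zu y / ∑ z, Zu z)))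
        + w * Real.logb 2 (Fintype.card Y)
        + ∑ y, (Zu y + wy y) * Real.logb 2 (((∑ z, Zu z) + w) / Zu y) := by
  have hZv_sum : 0 ≤ ∑ z, Zv z := sum_nonneg fun y _ => hZv y
  have htermwise := sum_le_sum fun y (_ : y ∈ univ) =>
    neg_mul_logb_div_le_mul_logb_div one_lt_two (hZu y) (hZv y) (hwy y)
      (single_le_sum (fun z _ => (hZu z).le) (mem_univ y)) hZv_sum hw
  have hentropy := neg_sum_mul_logb_div_sum_nonneg univ (fun y _ => (hZu y).le) one_lt_two
  have hcard : 0 ≤ w * logb 2 (Fintype.card Y) :=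
    mul_nonneg (hZv_sum.trans hw) (logb_natCast_nonneg one_lt_two _)
  rw [sum_neg_distrib] at htermwise
  linarith
end
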